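/- arXiv:0902.0646 — 3 statements merged into one kernel-verified Lean document; each statement's English description precedes it below -/
import Mathlib

section
/- For the factorial-weighted norm ‖f‖_{I,α,τ_c} := sup_{t∈I} sup_{k≥0} |∂^k f(t)| τ_c^{α+k}/Γ(α+k), the product estimate ‖f·g‖_{I,α+β,τ_c} ≤ B(α,β) ‖f‖_{I,α,τ_c} ‖g‖_{I,β,τ_c} holds, where B(α,β) = Γ(α)Γ(β)/Γ(α+β) is the Beta function. -/
open Real

/-- The factorial-weighted norm `‖f‖_{I,α,τc} = sup_{t∈I} sup_{k≥0} |∂^k f(t)| τc^{α+k}/Γ(α+k)`. -/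
noncomputable def facNorm (I : Set ℝ) (α τc : ℝ) (f : ℝ → ℂ) : ENNReal :=
  ⨆ t ∈ I, ⨆ k : ℕ,
    ENNReal.ofReal (‖iteratedDeriv k f t‖ * τc ^ (α + (k : ℝ)) / Real.Gamma (α + (k : ℝ)))

/-- Binomial-Beta identity: `∑ C(k,j) Γ(α+j) Γ(β+k-j) = Γ(α)Γ(β)/Γ(α+β) * Γ(α+β+k)`. -/
lemma gamma_binom_sum (α β : ℝ) (hα : 0 < α) (hβ : 0 < β) (k : ℕ) :
    ∑ j ∈ Finset.range (k + 1), (k.choose j : ℝ) * Real.Gamma (α + j) *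
        Real.Gamma (β + ((k - j : ℕ) : ℝ)) =
      Real.Gamma α * Real.Gamma β / Real.Gamma (α + β) * Real.Gamma (α + β + k) := by
  induction k with
  | zero =>
    have h : Real.Gamma (α + β) ≠ 0 := (Real.Gamma_pos_of_pos (by linarith)).ne'
    simp [div_mul_cancel₀, h]
  | succ k ih =>
    have hA : ∀ j : ℕ, Real.Gamma (α + ((j + 1 : ℕ) : ℝ)) = (α + j) * Real.Gamma (α + j) := by
      intro j
      have h : α + ((j + 1 : ℕ) : ℝ) = (α + j) + 1 := by push_cast; ring
      rw [h, Real.Gamma_add_one (by positivity)]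
    have hB : ∀ j : ℕ, Real.Gamma (β + ((j + 1 : ℕ) : ℝ)) = (β + j) * Real.Gamma (β + j) := by
      intro j
      have h : β + ((j + 1 : ℕ) : ℝ) = (β + j) + 1 := by push_cast; ring
      rw [h, Real.Gamma_add_one (by positivity)]
    have hG : Real.Gamma (α + β + ((k + 1 : ℕ) : ℝ)) =
        (α + β + k) * Real.Gamma (α + β + k) := by
      have h : α + β + ((k + 1 : ℕ) : ℝ) = (α + β + k) + 1 := by push_cast; ring
      rw [h, Real.Gamma_add_one (by positivity)]
    -- per-term Pascal split
    have split : ∀ j ∈ Finset.range (k + 1),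
        ((k + 1).choose (j + 1) : ℝ) * Real.Gamma (α + ((j + 1 : ℕ) : ℝ)) *
            Real.Gamma (β + ((k + 1 - (j + 1) : ℕ) : ℝ)) =
          (k.choose j : ℝ) * ((α + j) * Real.Gamma (α + j)) *
              Real.Gamma (β + ((k - j : ℕ) : ℝ))
            + (k.choose (j + 1) : ℝ) * Real.Gamma (α + ((j + 1 : ℕ) : ℝ)) *
              Real.Gamma (β + ((k - j : ℕ) : ℝ)) := by
      intro j hj
      have h1 : k + 1 - (j + 1) = k - j := by omega
      rw [h1, Nat.choose_succ_succ, hA j]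
      push_cast
      ring
    -- the `b`-sum plus the `j = 0` term reassembles and drops its top term
    have right_piece : (∑ j ∈ Finset.range (k + 1), (k.choose (j + 1) : ℝ) *
            Real.Gamma (α + ((j + 1 : ℕ) : ℝ)) * Real.Gamma (β + ((k - j : ℕ) : ℝ)))
          + (k.choose 0 : ℝ) * Real.Gamma (α + ((0 : ℕ) : ℝ)) *
            Real.Gamma (β + ((k + 1 - 0 : ℕ) : ℝ)) =
        ∑ j ∈ Finset.range (k + 1), (k.choose j : ℝ) * Real.Gamma (α + j) *
          ((β + ((k - j : ℕ) : ℝ)) * Real.Gamma (β + ((k - j : ℕ) : ℝ))) := by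
      have reassemble : ∑ j ∈ Finset.range (k + 2), (k.choose j : ℝ) * Real.Gamma (α + j) *
            Real.Gamma (β + ((k + 1 - j : ℕ) : ℝ)) =
          (∑ j ∈ Finset.range (k + 1), (k.choose (j + 1) : ℝ) *
              Real.Gamma (α + ((j + 1 : ℕ) : ℝ)) * Real.Gamma (β + ((k - j : ℕ) : ℝ)))
            + (k.choose 0 : ℝ) * Real.Gamma (α + ((0 : ℕ) : ℝ)) *
              Real.Gamma (β + ((k + 1 - 0 : ℕ) : ℝ)) := by
        rw [Finset.sum_range_succ' (fun j => (k.choose j : ℝ) * Real.Gamma (α + j) *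
          Real.Gamma (β + ((k + 1 - j : ℕ) : ℝ))) (k + 1)]
        congr 1
        refine Finset.sum_congr rfl fun j hj => ?_
        have h1 : k + 1 - (j + 1) = k - j := by omega
        rw [h1]
      rw [← reassemble, Finset.sum_range_succ,
        Nat.choose_eq_zero_of_lt (Nat.lt_succ_self k)]
      simp only [Nat.cast_zero, zero_mul, add_zero]
      refine Finset.sum_congr rfl fun j hj => ?_
      have hjk : j ≤ k := Nat.lt_succ_iff.mp (Finset.mem_range.mp hj)
      rw [show k + 1 - j = (k - j) + 1 by omega, hB (k - j)]
    have combine : ∀ j ∈ Finset.range (k + 1),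
        (k.choose j : ℝ) * ((α + j) * Real.Gamma (α + j)) * Real.Gamma (β + ((k - j : ℕ) : ℝ))
          + (k.choose j : ℝ) * Real.Gamma (α + j) *
            ((β + ((k - j : ℕ) : ℝ)) * Real.Gamma (β + ((k - j : ℕ) : ℝ)))
        = (α + β + k) * ((k.choose j : ℝ) * Real.Gamma (α + j) *
            Real.Gamma (β + ((k - j : ℕ) : ℝ))) := by
      intro j hj
      have hjk : j ≤ k := Nat.lt_succ_iff.mp (Finset.mem_range.mp hj)
      rw [Nat.cast_sub hjk]
      ring
    calc ∑ j ∈ Finset.range (k + 1 + 1), ((k + 1).choose j : ℝ) * Real.Gamma (α + j) *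
            Real.Gamma (β + ((k + 1 - j : ℕ) : ℝ))
        = (∑ j ∈ Finset.range (k + 1), ((k + 1).choose (j + 1) : ℝ) *
              Real.Gamma (α + ((j + 1 : ℕ) : ℝ)) *
              Real.Gamma (β + ((k + 1 - (j + 1) : ℕ) : ℝ)))
            + ((k + 1).choose 0 : ℝ) * Real.Gamma (α + ((0 : ℕ) : ℝ)) *
              Real.Gamma (β + ((k + 1 - 0 : ℕ) : ℝ)) :=
          Finset.sum_range_succ' _ (k + 1)
      _ = (∑ j ∈ Finset.range (k + 1),
              ((k.choose j : ℝ) * ((α + j) * Real.Gamma (α + j)) *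
                  Real.Gamma (β + ((k - j : ℕ) : ℝ))
                + (k.choose (j + 1) : ℝ) * Real.Gamma (α + ((j + 1 : ℕ) : ℝ)) *
                  Real.Gamma (β + ((k - j : ℕ) : ℝ))))
            + (k.choose 0 : ℝ) * Real.Gamma (α + ((0 : ℕ) : ℝ)) *
              Real.Gamma (β + ((k + 1 - 0 : ℕ) : ℝ)) := by
          rw [Finset.sum_congr rfl split]
          norm_num
      _ = (∑ j ∈ Finset.range (k + 1), (k.choose j : ℝ) * ((α + j) * Real.Gamma (α + j)) *
              Real.Gamma (β + ((k - j : ℕ) : ℝ)))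
          + ((∑ j ∈ Finset.range (k + 1), (k.choose (j + 1) : ℝ) *
              Real.Gamma (α + ((j + 1 : ℕ) : ℝ)) * Real.Gamma (β + ((k - j : ℕ) : ℝ)))
            + (k.choose 0 : ℝ) * Real.Gamma (α + ((0 : ℕ) : ℝ)) *
              Real.Gamma (β + ((k + 1 - 0 : ℕ) : ℝ))) := by
          rw [Finset.sum_add_distrib]
          ring
      _ = (∑ j ∈ Finset.range (k + 1), (k.choose j : ℝ) * ((α + j) * Real.Gamma (α + j)) *
              Real.Gamma (β + ((k - j : ℕ) : ℝ)))
          + ∑ j ∈ Finset.range (k + 1), (k.choose j : ℝ) * Real.Gamma (α + j) *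
              ((β + ((k - j : ℕ) : ℝ)) * Real.Gamma (β + ((k - j : ℕ) : ℝ))) := by
          rw [right_piece]
      _ = ∑ j ∈ Finset.range (k + 1), (α + β + k) * ((k.choose j : ℝ) * Real.Gamma (α + j) *
              Real.Gamma (β + ((k - j : ℕ) : ℝ))) := by
          rw [← Finset.sum_add_distrib]
          exact Finset.sum_congr rfl combine
      _ = (α + β + k) * ∑ j ∈ Finset.range (k + 1), (k.choose j : ℝ) * Real.Gamma (α + j) *
              Real.Gamma (β + ((k - j : ℕ) : ℝ)) := by rw [Finset.mul_sum]
      _ = Real.Gamma α * Real.Gamma β / Real.Gamma (α + β) *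
            Real.Gamma (α + β + ((k + 1 : ℕ) : ℝ)) := by rw [ih, hG]; ring

theorem facNorm_mul_le (I : Set ℝ) (α β τc : ℝ) (hα : 0 < α) (hβ : 0 < β) (hτ : 0 < τc)
    (f g : ℝ → ℂ) (hf : ContDiff ℝ (⊤ : ℕ∞) f) (hg : ContDiff ℝ (⊤ : ℕ∞) g)
    (hfin : facNorm I α τc f ≠ ⊤) (hgin : facNorm I β τc g ≠ ⊤) :
    facNorm I (α + β) τc (fun x => f x * g x) ≤
      ENNReal.ofReal (Real.Gamma α * Real.Gamma β / Real.Gamma (α + β)) *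
        (facNorm I α τc f * facNorm I β τc g) := by
  set Nf := (facNorm I α τc f).toReal with hNf
  set Ng := (facNorm I β τc g).toReal with hNg
  have hNf0 : 0 ≤ Nf := ENNReal.toReal_nonneg
  have hNg0 : 0 ≤ Ng := ENNReal.toReal_nonneg
  -- pointwise bounds
  have hfb : ∀ t ∈ I, ∀ k : ℕ, ‖iteratedDeriv k f t‖ ≤
      Nf * Real.Gamma (α + k) / τc ^ (α + (k : ℝ)) := by
    intro t ht k
    have hle : ENNReal.ofReal (‖iteratedDeriv k f t‖ * τc ^ (α + (k : ℝ)) /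
        Real.Gamma (α + (k : ℝ))) ≤ facNorm I α τc f := by
      unfold facNorm
      exact le_iSup₂_of_le t ht (le_iSup (fun k : ℕ => ENNReal.ofReal
        (‖iteratedDeriv k f t‖ * τc ^ (α + (k : ℝ)) /
          Real.Gamma (α + (k : ℝ)))) k)
    have hG : 0 < Real.Gamma (α + k) := Real.Gamma_pos_of_pos (by positivity)
    have hτp : (0 : ℝ) < τc ^ (α + (k : ℝ)) := Real.rpow_pos_of_pos hτ _
    have h1 : ‖iteratedDeriv k f t‖ * τc ^ (α + (k : ℝ)) /
        Real.Gamma (α + (k : ℝ)) ≤ Nf := by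
      have h2 := ENNReal.toReal_mono hfin hle
      rwa [ENNReal.toReal_ofReal (by positivity)] at h2
    rw [div_le_iff₀ hG] at h1
    rw [le_div_iff₀ hτp]
    exact h1
  have hgb : ∀ t ∈ I, ∀ k : ℕ, ‖iteratedDeriv k g t‖ ≤
      Ng * Real.Gamma (β + k) / τc ^ (β + (k : ℝ)) := by
    intro t ht k
    have hle : ENNReal.ofReal (‖iteratedDeriv k g t‖ * τc ^ (β + (k : ℝ)) /
        Real.Gamma (β + (k : ℝ))) ≤ facNorm I β τc g := by
      unfold facNorm
      exact le_iSup₂_of_le t ht (le_iSup (fun k : ℕ => ENNReal.ofReal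
        (‖iteratedDeriv k g t‖ * τc ^ (β + (k : ℝ)) /
          Real.Gamma (β + (k : ℝ)))) k)
    have hG : 0 < Real.Gamma (β + k) := Real.Gamma_pos_of_pos (by positivity)
    have hτp : (0 : ℝ) < τc ^ (β + (k : ℝ)) := Real.rpow_pos_of_pos hτ _
    have h1 : ‖iteratedDeriv k g t‖ * τc ^ (β + (k : ℝ)) /
        Real.Gamma (β + (k : ℝ)) ≤ Ng := by
      have h2 := ENNReal.toReal_mono hgin hle
      rwa [ENNReal.toReal_ofReal (by positivity)] at h2
    rw [div_le_iff₀ hG] at h1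
    rw [le_div_iff₀ hτp]
    exact h1
  -- main estimate
  rw [facNorm]
  refine iSup₂_le fun t ht => iSup_le fun k => ?_
  have hBnn : 0 ≤ Real.Gamma α * Real.Gamma β / Real.Gamma (α + β) := by
    have h1 := Real.Gamma_pos_of_pos hα
    have h2 := Real.Gamma_pos_of_pos hβ
    have h3 := Real.Gamma_pos_of_pos (by linarith : (0:ℝ) < α + β)
    positivity
  have hfg : facNorm I α τc f = ENNReal.ofReal Nf := (ENNReal.ofReal_toReal hfin).symm
  have hgg : facNorm I β τc g = ENNReal.ofReal Ng := (ENNReal.ofReal_toReal hgin).symm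
  rw [hfg, hgg, ← ENNReal.ofReal_mul hNf0, ← ENNReal.ofReal_mul hBnn]
  apply ENNReal.ofReal_le_ofReal
  have hGk : 0 < Real.Gamma (α + β + k) := Real.Gamma_pos_of_pos (by positivity)
  have hτk : (0 : ℝ) < τc ^ (α + β + (k : ℝ)) := Real.rpow_pos_of_pos hτ _
  rw [div_le_iff₀ hGk]
  -- key derivative bound
  have hd : ‖iteratedDeriv k (fun x => f x * g x) t‖ ≤
      ∑ j ∈ Finset.range (k + 1), (k.choose j : ℝ) *
        ‖iteratedDeriv j f t‖ * ‖iteratedDeriv (k - j) g t‖ := by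
    have h := norm_iteratedFDeriv_mul_le (𝕜 := ℝ) (n := k) hf hg t
      (by exact_mod_cast (le_top : (k : ℕ∞) ≤ ⊤))
    simpa [norm_iteratedFDeriv_eq_norm_iteratedDeriv] using h
  have hsum : ∑ j ∈ Finset.range (k + 1), (k.choose j : ℝ) *
        ‖iteratedDeriv j f t‖ * ‖iteratedDeriv (k - j) g t‖ ≤
      Real.Gamma α * Real.Gamma β / Real.Gamma (α + β) * (Nf * Ng) *
        Real.Gamma (α + β + k) / τc ^ (α + β + (k : ℝ)) := by
    have hbound : ∀ j ∈ Finset.range (k + 1), (k.choose j : ℝ) *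
          ‖iteratedDeriv j f t‖ * ‖iteratedDeriv (k - j) g t‖ ≤
        Nf * Ng / τc ^ (α + β + (k : ℝ)) *
          ((k.choose j : ℝ) * Real.Gamma (α + j) * Real.Gamma (β + ((k - j : ℕ) : ℝ))) := by
      intro j hj
      have hjk : j ≤ k := Nat.lt_succ_iff.mp (Finset.mem_range.mp hj)
      have h1 := hfb t ht j
      have h2 := hgb t ht (k - j)
      have hGa : 0 < Real.Gamma (α + j) := Real.Gamma_pos_of_pos (by positivity)
      have hGb : 0 < Real.Gamma (β + ((k - j : ℕ) : ℝ)) := Real.Gamma_pos_of_pos (by positivity)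
      have hτa : (0 : ℝ) < τc ^ (α + (j : ℝ)) := Real.rpow_pos_of_pos hτ _
      have hτb : (0 : ℝ) < τc ^ (β + ((k - j : ℕ) : ℝ)) := Real.rpow_pos_of_pos hτ _
      have habg : 0 ≤ ‖iteratedDeriv (k - j) g t‖ := norm_nonneg _
      have hmul : ‖iteratedDeriv j f t‖ * ‖iteratedDeriv (k - j) g t‖ ≤
          (Nf * Real.Gamma (α + j) / τc ^ (α + (j : ℝ))) *
          (Ng * Real.Gamma (β + ((k - j : ℕ) : ℝ)) / τc ^ (β + ((k - j : ℕ) : ℝ))) :=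
        mul_le_mul h1 h2 habg (by positivity)
      have hτsplit : τc ^ (α + (j : ℝ)) * τc ^ (β + ((k - j : ℕ) : ℝ)) =
          τc ^ (α + β + (k : ℝ)) := by
        rw [← Real.rpow_add hτ]
        congr 1
        rw [Nat.cast_sub hjk]
        ring
      have hchoose : (0 : ℝ) ≤ (k.choose j : ℝ) := Nat.cast_nonneg _
      calc (k.choose j : ℝ) * ‖iteratedDeriv j f t‖ *
              ‖iteratedDeriv (k - j) g t‖
          ≤ (k.choose j : ℝ) * ((Nf * Real.Gamma (α + j) / τc ^ (α + (j : ℝ))) *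
              (Ng * Real.Gamma (β + ((k - j : ℕ) : ℝ)) / τc ^ (β + ((k - j : ℕ) : ℝ)))) := by
            rw [mul_assoc]
            exact mul_le_mul_of_nonneg_left hmul hchoose
        _ = Nf * Ng / τc ^ (α + β + (k : ℝ)) *
              ((k.choose j : ℝ) * Real.Gamma (α + j) * Real.Gamma (β + ((k - j : ℕ) : ℝ))) := by
            rw [← hτsplit]
            field_simp
    calc ∑ j ∈ Finset.range (k + 1), (k.choose j : ℝ) *
          ‖iteratedDeriv j f t‖ * ‖iteratedDeriv (k - j) g t‖
        ≤ ∑ j ∈ Finset.range (k + 1), Nf * Ng / τc ^ (α + β + (k : ℝ)) *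
            ((k.choose j : ℝ) * Real.Gamma (α + j) * Real.Gamma (β + ((k - j : ℕ) : ℝ))) :=
          Finset.sum_le_sum hbound
      _ = Nf * Ng / τc ^ (α + β + (k : ℝ)) *
            ∑ j ∈ Finset.range (k + 1), (k.choose j : ℝ) * Real.Gamma (α + j) *
              Real.Gamma (β + ((k - j : ℕ) : ℝ)) := by rw [← Finset.mul_sum]
      _ = Nf * Ng / τc ^ (α + β + (k : ℝ)) *
            (Real.Gamma α * Real.Gamma β / Real.Gamma (α + β) * Real.Gamma (α + β + k)) := by
          rw [gamma_binom_sum α β hα hβ k]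
      _ = Real.Gamma α * Real.Gamma β / Real.Gamma (α + β) * (Nf * Ng) *
            Real.Gamma (α + β + k) / τc ^ (α + β + (k : ℝ)) := by ring
  have habs : ‖iteratedDeriv k (fun x => f x * g x) t‖ ≤
      Real.Gamma α * Real.Gamma β / Real.Gamma (α + β) * (Nf * Ng) *
        Real.Gamma (α + β + k) / τc ^ (α + β + (k : ℝ)) := le_trans hd hsum
  calc ‖iteratedDeriv k (fun x => f x * g x) t‖ * τc ^ (α + β + (k : ℝ))
      ≤ (Real.Gamma α * Real.Gamma β / Real.Gamma (α + β) * (Nf * Ng) *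
          Real.Gamma (α + β + k) / τc ^ (α + β + (k : ℝ))) * τc ^ (α + β + (k : ℝ)) :=
        mul_le_mul_of_nonneg_right habs (le_of_lt hτk)
    _ = Real.Gamma α * Real.Gamma β / Real.Gamma (α + β) * (Nf * Ng) *
          Real.Gamma (α + β + k) := div_mul_cancel₀ _ (ne_of_gt hτk)
end

section
/- For the factorial-weighted norm with α > 1, if f is smooth on an interval I containing s and t, then ‖∫_s^· f(r) dr‖_{I,α-1,τ_c} ≤ max{(α-1)|t-s|/τ_c, 1} · ‖f‖_{I,α,τ_c}, where the integral function is x ↦ ∫_s^x f(r) dr. -/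
open Real MeasureTheory

theorem facNorm_integral_le (s t α τc : ℝ) (hst : s ≤ t) (hα : 1 < α) (hτ : 0 < τc)
    (f : ℝ → ℂ) (hf : ContDiff ℝ (⊤ : ℕ∞) f) :
    facNorm (Set.Icc s t) (α - 1) τc (fun x => ∫ r in s..x, f r) ≤
      ENNReal.ofReal (max ((α - 1) * |t - s| / τc) 1) * facNorm (Set.Icc s t) α τc f := by
  have hfc : Continuous f := hf.continuous
  have hIne : (Set.Icc s t).Nonempty := Set.nonempty_Icc.2 hst
  have hΓα : 0 < Real.Gamma α := Real.Gamma_pos_of_pos (by linarith)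
  have hΓα1 : 0 < Real.Gamma (α - 1) := Real.Gamma_pos_of_pos (by linarith)
  have hΓrel : Real.Gamma α = (α - 1) * Real.Gamma (α - 1) := by
    have h := Real.Gamma_add_one (s := α - 1) (by intro h; linarith)
    rw [show α - 1 + 1 = α by ring] at h
    exact h
  -- max of |f| on the interval
  obtain ⟨r₀, hr₀I, hr₀max⟩ :=
    isCompact_Icc.exists_isMaxOn hIne ((continuous_norm.comp hfc).continuousOn)
  set M := ‖f r₀‖ with hM
  have hM0 : 0 ≤ M := norm_nonneg _
  have hfle : ∀ r ∈ Set.Icc s t, ‖f r‖ ≤ M := fun r hr => hr₀max hr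
  -- lower bound for facNorm f
  have hterm : ∀ x ∈ Set.Icc s t, ∀ k : ℕ,
      ENNReal.ofReal (‖iteratedDeriv k f x‖ * τc ^ (α + (k : ℝ)) /
        Real.Gamma (α + (k : ℝ))) ≤ facNorm (Set.Icc s t) α τc f := by
    intro x hx k
    exact le_iSup₂_of_le x hx (le_iSup_of_le k le_rfl)
  have hbase : ENNReal.ofReal (M * τc ^ α / Real.Gamma α) ≤ facNorm (Set.Icc s t) α τc f := by
    have := hterm r₀ hr₀I 0
    simpa [iteratedDeriv_zero] using this
  have hone : (1 : ENNReal) ≤ ENNReal.ofReal (max ((α - 1) * |t - s| / τc) 1) :=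
    ENNReal.one_le_ofReal.2 (le_max_right _ _)
  have hderiv : deriv (fun x => ∫ r in s..x, f r) = f :=
    funext fun x => Continuous.deriv_integral f hfc s x
  rw [facNorm]
  refine iSup₂_le fun x hx => iSup_le fun k => ?_
  match k with
  | Nat.succ k =>
    have heq : iteratedDeriv (k + 1) (fun x => ∫ r in s..x, f r) x = iteratedDeriv k f x := by
      rw [iteratedDeriv_succ', hderiv]
    have hexp : α - 1 + ((k + 1 : ℕ) : ℝ) = α + (k : ℝ) := by push_cast; ring
    rw [heq, hexp]
    exact le_trans (hterm x hx k) (le_mul_of_one_le_left zero_le hone)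
  | 0 =>
    have hxI : s ≤ x ∧ x ≤ t := hx
    have hInt : ‖∫ r in s..x, f r‖ ≤ M * (t - s) := by
      have h1 : ‖∫ r in s..x, f r‖ ≤ M * |x - s| := by
        apply intervalIntegral.norm_integral_le_of_norm_le_const
        intro r hr
        rw [Set.uIoc_of_le hxI.1] at hr
        exact hfle r ⟨le_of_lt hr.1, le_trans hr.2 hxI.2⟩
      calc ‖∫ r in s..x, f r‖ ≤ M * |x - s| := h1
        _ ≤ M * (t - s) := by
            apply mul_le_mul_of_nonneg_left _ hM0
            rw [abs_of_nonneg (by linarith [hxI.1])]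
            linarith [hxI.2]
    have hreal : ‖∫ r in s..x, f r‖ * τc ^ (α - 1 + ((0:ℕ):ℝ)) /
        Real.Gamma (α - 1 + ((0:ℕ):ℝ)) ≤
        ((α - 1) * (t - s) / τc) * (M * τc ^ α / Real.Gamma α) := by
      have hpow : τc ^ α = τc ^ (α - 1) * τc := by
        rw [show τc ^ α = τc ^ (α - 1 + 1) from by norm_num, Real.rpow_add hτ, Real.rpow_one]
      have hτpow : (0:ℝ) < τc ^ (α - 1) := Real.rpow_pos_of_pos hτ _
      have hτne : τc ≠ 0 := hτ.ne'
      have hΓne : Real.Gamma (α - 1) ≠ 0 := hΓα1.ne'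
      have hαne : α - 1 ≠ 0 := by intro h; linarith
      have hrhs : ((α - 1) * (t - s) / τc) * (M * τc ^ α / Real.Gamma α)
          = (M * (t - s)) * (τc ^ (α - 1) / Real.Gamma (α - 1)) := by
        rw [hpow, hΓrel]
        field_simp
      simp only [Nat.cast_zero, add_zero]
      rw [hrhs, mul_div_assoc]
      exact mul_le_mul_of_nonneg_right hInt (div_nonneg hτpow.le hΓα1.le)
    calc ENNReal.ofReal (‖iteratedDeriv 0 (fun x => ∫ r in s..x, f r) x‖ *
          τc ^ (α - 1 + ((0:ℕ):ℝ)) / Real.Gamma (α - 1 + ((0:ℕ):ℝ)))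
        ≤ ENNReal.ofReal (((α - 1) * (t - s) / τc) * (M * τc ^ α / Real.Gamma α)) := by
          apply ENNReal.ofReal_le_ofReal
          simpa [iteratedDeriv_zero] using hreal
      _ = ENNReal.ofReal ((α - 1) * (t - s) / τc) * ENNReal.ofReal (M * τc ^ α / Real.Gamma α) :=
          ENNReal.ofReal_mul (div_nonneg (mul_nonneg (by linarith) (by linarith)) hτ.le)
      _ ≤ ENNReal.ofReal (max ((α - 1) * |t - s| / τc) 1) * facNorm (Set.Icc s t) α τc f := by
          apply mul_le_mul' _ hbase
          apply ENNReal.ofReal_le_ofReal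
          refine le_trans ?_ (le_max_left _ _)
          rw [abs_of_nonneg (by linarith)]
end

section
/- The Weyl quantization of the symbol κ(p,q) = p^m g(q) acts in position space as (W_ε κ)ψ(x) = (-iε)^m Σ_{j=0}^{m} C(m,j) 2^{-j} (∂^j g)(x) (∂^{m-j} ψ)(x), where C(m,j) is the binomial coefficient. -/
open Real MeasureTheory FourierTransform Finset SchwartzMap

private lemma exists_schwartz_iteratedDeriv (f : SchwartzMap ℝ ℂ) (n : ℕ) :
    ∃ F : SchwartzMap ℝ ℂ, ⇑F = iteratedDeriv n ⇑f := by
  induction n with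
  | zero => exact ⟨f, by simp [iteratedDeriv_zero]⟩
  | succ n ih =>
      obtain ⟨F, hF⟩ := ih
      exact ⟨SchwartzMap.derivCLM ℝ ℂ F, by
        ext u
        rw [iteratedDeriv_succ, ← hF]
        exact SchwartzMap.derivCLM_apply ℝ F u⟩

private lemma integral_fourier_eq_self (f : SchwartzMap ℝ ℂ) :
    (∫ w : ℝ, 𝓕 ⇑f w) = f 0 := by
  have h2 : Integrable (𝓕 ⇑f) := by
    have := (SchwartzMap.fourierTransformCLM ℝ f).integrable (μ := volume)
    simpa [SchwartzMap.fourier_coe] using this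
  have h := MeasureTheory.Integrable.fourierInv_fourier_eq f.integrable (v := 0) h2 f.continuous.continuousAt
  rw [← h, Real.fourierInv_eq]
  simp

private lemma iteratedDeriv_comp_affine {f : ℝ → ℂ} (hf : ContDiff ℝ (⊤:ℕ∞) f)
    (a b : ℝ) (n : ℕ) (u : ℝ) :
    iteratedDeriv n (fun t : ℝ => f (a + b * t)) u
      = b ^ n • iteratedDeriv n f (a + b * u) := by
  have h1 : ContDiff ℝ ((n : ℕ∞) : WithTop ℕ∞) (fun t : ℝ => f (a + t)) :=
    ((hf.of_le (by exact_mod_cast le_top : ((n:ℕ∞) : WithTop ℕ∞) ≤ _)).comp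
      (contDiff_const.add contDiff_id))
  have := iteratedDeriv_comp_const_smul (F := ℂ) (f := fun t : ℝ => f (a + t)) h1 b
  have h2 : (fun t : ℝ => f (a + b * t)) = fun t : ℝ => (fun s : ℝ => f (a + s)) (b * t) := rfl
  rw [h2, this, iteratedDeriv_comp_const_add n f a]

private lemma iteratedDeriv_mul_leibniz {f g : ℝ → ℂ} (hf : ContDiff ℝ (⊤:ℕ∞) f)
    (hg : ContDiff ℝ (⊤:ℕ∞) g) (n : ℕ) :
    iteratedDeriv n (fun y => f y * g y)
      = fun x => ∑ j ∈ Finset.range (n+1),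
          (n.choose j : ℂ) * iteratedDeriv j f x * iteratedDeriv (n - j) g x := by
  have hdf : ∀ k : ℕ, Differentiable ℝ (iteratedDeriv k f) := fun k =>
    ContDiff.differentiable_iteratedDeriv k
      (hf.of_le (by exact_mod_cast le_top : ((k+1:ℕ):WithTop ℕ∞) ≤ ((⊤:ℕ∞):WithTop ℕ∞)))
      (by exact_mod_cast k.lt_succ_self)
  have hdg : ∀ k : ℕ, Differentiable ℝ (iteratedDeriv k g) := fun k =>
    ContDiff.differentiable_iteratedDeriv k
      (hg.of_le (by exact_mod_cast le_top : ((k+1:ℕ):WithTop ℕ∞) ≤ ((⊤:ℕ∞):WithTop ℕ∞)))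
      (by exact_mod_cast k.lt_succ_self)
  induction n with
  | zero => funext x; simp [iteratedDeriv_zero]
  | succ n ih =>
    funext x
    rw [iteratedDeriv_succ, ih]
    have hterm : ∀ j ∈ range (n+1), DifferentiableAt ℝ
        (fun x => (n.choose j : ℂ) * iteratedDeriv j f x * iteratedDeriv (n-j) g x) x :=
      fun j _ => ((((hdf j) x).const_mul _).mul ((hdg (n-j)) x))
    rw [deriv_fun_sum hterm]
    have hterm2 : ∀ j ∈ range (n+1),
        deriv (fun x => (n.choose j:ℂ) * iteratedDeriv j f x * iteratedDeriv (n-j) g x) x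
        = (n.choose j:ℂ) * (iteratedDeriv (j+1) f x * iteratedDeriv (n-j) g x
            + iteratedDeriv j f x * iteratedDeriv (n+1-j) g x) := by
      intro j hj
      have hj' : j ≤ n := Nat.lt_succ_iff.mp (Finset.mem_range.mp hj)
      have e : (fun x => (n.choose j:ℂ) * iteratedDeriv j f x * iteratedDeriv (n-j) g x)
          = fun x => (n.choose j:ℂ) * (iteratedDeriv j f x * iteratedDeriv (n-j) g x) := by
        funext y; ring
      rw [e, deriv_const_mul (d := fun y => iteratedDeriv j f y * iteratedDeriv (n-j) g y) _
          (((hdf j) x).mul ((hdg (n-j)) x)),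
        deriv_fun_mul ((hdf j) x) ((hdg (n-j)) x), ← iteratedDeriv_succ, ← iteratedDeriv_succ,
        show n - j + 1 = n + 1 - j from (Nat.succ_sub hj').symm]
    rw [Finset.sum_congr rfl hterm2]
    simp only [mul_add, Finset.sum_add_distrib]
    rw [Finset.sum_range_succ'
      (fun j => ((n+1).choose j : ℂ) * iteratedDeriv j f x * iteratedDeriv (n+1-j) g x) (n+1)]
    have e1 : ∀ i ∈ range (n+1),
        ((n+1).choose (i+1) : ℂ) * iteratedDeriv (i+1) f x * iteratedDeriv (n+1-(i+1)) g x
        = (n.choose i : ℂ) * (iteratedDeriv (i+1) f x * iteratedDeriv (n-i) g x)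
          + (n.choose (i+1) : ℂ) * iteratedDeriv (i+1) f x * iteratedDeriv (n-i) g x := by
      intro i _
      rw [Nat.succ_sub_succ, Nat.choose_succ_succ']
      push_cast
      ring
    have hS2 : ∑ j ∈ range (n+1), (n.choose j : ℂ) * (iteratedDeriv j f x * iteratedDeriv (n+1-j) g x)
        = (∑ i ∈ range (n+1), (n.choose (i+1) : ℂ) * iteratedDeriv (i+1) f x * iteratedDeriv (n-i) g x)
          + iteratedDeriv 0 f x * iteratedDeriv (n+1) g x := by
      rw [Finset.sum_range_succ'
        (fun j => (n.choose j : ℂ) * (iteratedDeriv j f x * iteratedDeriv (n+1-j) g x)) n,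
        Finset.sum_range_succ
        (fun i => (n.choose (i+1) : ℂ) * iteratedDeriv (i+1) f x * iteratedDeriv (n-i) g x) n]
      simp only [Nat.succ_sub_succ, Nat.choose_succ_self, Nat.cast_zero, zero_mul, add_zero,
        Nat.choose_zero_right, Nat.cast_one, one_mul, Nat.sub_zero, mul_assoc]
    rw [Finset.sum_congr rfl e1, Finset.sum_add_distrib, hS2]
    simp only [Nat.sub_zero, Nat.choose_zero_right, Nat.cast_one, one_mul, iteratedDeriv_zero]
    ring

private lemma hasTemperateGrowth_affine (a b : ℝ) :
    Function.HasTemperateGrowth (fun u : ℝ => a + b * u) := by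
  apply Function.HasTemperateGrowth.of_fderiv (k := 1) (C := |a| + |b|)
  · have hfd : fderiv ℝ (fun u : ℝ => a + b * u)
        = fun _ : ℝ => ContinuousLinearMap.smulRight (1 : ℝ →L[ℝ] ℝ) b := by
      funext u
      have h : HasDerivAt (fun u : ℝ => a + b * u) b u := by
        simpa using ((hasDerivAt_id u).const_mul b).const_add a
      simpa [ContinuousLinearMap.smulRight_one_eq_toSpanSingleton] using h.hasFDerivAt.fderiv
    rw [hfd]
    exact Function.HasTemperateGrowth.const _
  · exact (differentiable_const a).add ((differentiable_id.const_mul b))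
  · intro u
    have h1 : ‖a + b * u‖ ≤ |a| + |b| * |u| := by
      rw [Real.norm_eq_abs]
      calc |a + b * u| ≤ |a| + |b * u| := abs_add_le _ _
        _ = |a| + |b| * |u| := by rw [abs_mul]
    refine h1.trans ?_
    rw [Real.norm_eq_abs, pow_one]
    nlinarith [abs_nonneg a, abs_nonneg b, abs_nonneg u]

private lemma hasTemperateGrowth_comp_affine {g : ℝ → ℂ} (hg : ContDiff ℝ (⊤:ℕ∞) g)
    (hpoly : ∀ n : ℕ, ∃ C : ℝ, ∃ N : ℕ, ∀ x : ℝ,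
      ‖iteratedDeriv n g x‖ ≤ C * (1 + |x|) ^ N)
    (a b : ℝ) : Function.HasTemperateGrowth (fun u : ℝ => g (a + b * u)) := by
  constructor
  · exact hg.comp (hasTemperateGrowth_affine a b).1
  · intro n
    obtain ⟨C, N, hCN⟩ := hpoly n
    have hC0 : 0 ≤ C := le_trans (norm_nonneg _) (by simpa using hCN 0)
    refine ⟨N, |b|^n * (C * ((1+|a|) * max 1 |b|)^N), fun u => ?_⟩
    rw [norm_iteratedFDeriv_eq_norm_iteratedDeriv,
      iteratedDeriv_comp_affine hg a b n u, norm_smul]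
    have hb : ‖b ^ n‖ = |b| ^ n := by rw [norm_pow, Real.norm_eq_abs]
    rw [hb, mul_assoc]
    apply mul_le_mul_of_nonneg_left _ (pow_nonneg (abs_nonneg b) n)
    have h2 : ‖iteratedDeriv n g (a + b * u)‖ ≤ C * (1 + |a + b * u|) ^ N := by
      exact hCN _
    refine h2.trans ?_
    rw [mul_assoc, ← mul_pow]
    apply mul_le_mul_of_nonneg_left _ hC0
    apply pow_le_pow_left₀ (by positivity)
    have hmax1 : (1:ℝ) ≤ max 1 |b| := le_max_left _ _
    have hmaxb : |b| ≤ max 1 |b| := le_max_right _ _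
    have habs : |a + b * u| ≤ |a| + |b| * |u| := by
      calc |a + b * u| ≤ |a| + |b * u| := abs_add_le _ _
        _ = |a| + |b| * |u| := by rw [abs_mul]
    rw [Real.norm_eq_abs]
    nlinarith [abs_nonneg a, abs_nonneg b, abs_nonneg u,
      mul_nonneg (sub_nonneg.2 hmaxb) (abs_nonneg u),
      mul_nonneg (mul_nonneg (abs_nonneg a) (sub_nonneg.2 hmax1)) (abs_nonneg u),
      mul_nonneg (abs_nonneg a) (sub_nonneg.2 hmax1),
      mul_nonneg (mul_nonneg (abs_nonneg a) (le_trans zero_le_one hmax1)) (abs_nonneg u)]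

private lemma antilipschitz_affine (x ε : ℝ) (hε : 0 < ε) :
    AntilipschitzWith (ε⁻¹.toNNReal) (fun u : ℝ => x + (-ε) * u) := by
  apply AntilipschitzWith.of_le_mul_dist
  intro u v
  rw [Real.dist_eq, Real.dist_eq]
  have h : x + (-ε) * u - (x + (-ε) * v) = -(ε * (u - v)) := by ring
  rw [h, abs_neg, abs_mul, abs_of_pos hε,
    Real.coe_toNNReal _ (inv_nonneg.2 hε.le), ← mul_assoc, inv_mul_cancel₀ hε.ne', one_mul]

theorem weyl_quantization_position_space (ε : ℝ) (hε : 0 < ε) (m : ℕ)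
    (g : ℝ → ℂ) (hg : ContDiff ℝ (⊤ : ℕ∞) g)
    (hpoly : ∀ n : ℕ, ∃ C : ℝ, ∃ N : ℕ, ∀ x : ℝ,
      ‖iteratedDeriv n g x‖ ≤ C * (1 + |x|) ^ N)
    (ψ : SchwartzMap ℝ ℂ) (x : ℝ) :
    (2 * Real.pi * ε : ℂ)⁻¹ *
        ∫ ξ : ℝ, ∫ y : ℝ,
          (ξ : ℂ) ^ m * g ((x + y) / 2) * Complex.exp (Complex.I * ξ * (x - y) / ε) * ψ y =
      (-(Complex.I) * ε) ^ m *
        ∑ j ∈ Finset.range (m + 1),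
          (Nat.choose m j : ℂ) * ((2 : ℂ) ^ j)⁻¹ * iteratedDeriv j g x *
            iteratedDeriv (m - j) (fun y => ψ y) x := by
  have hπ : (π:ℝ) ≠ 0 := Real.pi_ne_zero
  have hεne : (ε:ℝ) ≠ 0 := ne_of_gt hε
  have hg' : ContDiff ℝ (⊤:ℕ∞) g := hg.of_le (by simp)
  have hh : Function.HasTemperateGrowth (fun u : ℝ => g (x + (-(ε/2)) * u)) :=
    hasTemperateGrowth_comp_affine hg' hpoly x (-(ε/2))
  have haT : Function.HasTemperateGrowth (fun u : ℝ => x + (-ε) * u) :=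
    hasTemperateGrowth_affine x (-ε)
  have haA := antilipschitz_affine x ε hε
  set φ : SchwartzMap ℝ ℂ := SchwartzMap.bilinLeftCLM (ContinuousLinearMap.mul ℝ ℂ) hh
    (SchwartzMap.compCLMOfAntilipschitz ℝ haT haA ψ) with hφdef
  have hφ : ∀ u : ℝ, φ u = ψ (x + (-ε) * u) * g (x + (-(ε/2)) * u) := fun u => rfl
  have inner_eq : ∀ ξ : ℝ,
      (∫ y : ℝ, (ξ:ℂ)^m * g ((x+y)/2) * Complex.exp (Complex.I * ξ * (x - y)/ε) * ψ y)
      = (ε:ℂ) * ((ξ:ℂ)^m * 𝓕 ⇑φ (-ξ/(2*π))) := by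
    intro ξ
    set f : ℝ → ℂ :=
      fun y => (ξ:ℂ)^m * g ((x+y)/2) * Complex.exp (Complex.I * ξ * (x - y)/ε) * ψ y with hfdef
    have step1 : (∫ y, f y) = ∫ v, f (x - v) :=
      (MeasureTheory.integral_sub_left_eq_self f volume x).symm
    have step2 : (∫ u : ℝ, f (x - ε * u)) = |ε⁻¹| • ∫ v, f (x - v) :=
      MeasureTheory.Measure.integral_comp_mul_left (fun v => f (x - v)) ε
    have step3 : (∫ v, f (x - v)) = ε • ∫ u, f (x - ε * u) := by
      rw [step2, smul_smul, abs_of_pos (inv_pos.2 hε), mul_inv_cancel₀ hεne, one_smul]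
    have hfu : ∀ u : ℝ, f (x - ε * u)
        = (ξ:ℂ)^m * (Complex.exp (↑(-2 * π * (u * (-ξ/(2*π)))) * Complex.I) * φ u) := by
      intro u
      rw [hφ u, hfdef]
      have e1 : (x + (x - ε * u))/2 = x + (-(ε/2)) * u := by ring
      have e2 : x - ε * u = x + (-ε) * u := by ring
      have e3 : Complex.exp (Complex.I * ξ * (↑x - ↑(x - ε * u))/ε)
          = Complex.exp (↑(-2 * π * (u * (-ξ/(2*π)))) * Complex.I) := by
        congr 1
        have hεc : (ε:ℂ) ≠ 0 := Complex.ofReal_ne_zero.mpr hεne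
        have hπc : ((π:ℝ):ℂ) ≠ 0 := Complex.ofReal_ne_zero.mpr hπ
        push_cast
        field_simp
        ring
      simp only [e1, e3]
      rw [show (x - ε * u) = x + (-ε) * u from e2]
      ring
    rw [step1, step3]
    rw [show (∫ u, f (x - ε * u))
        = ∫ u, (ξ:ℂ)^m * (Complex.exp (↑(-2 * π * (u * (-ξ/(2*π)))) * Complex.I) * φ u)
      from congrArg _ (funext hfu)]
    rw [MeasureTheory.integral_const_mul, Complex.real_smul]
    congr 2
    rw [Real.fourier_eq']
    apply MeasureTheory.integral_congr_ae
    filter_upwards with u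
    simp [RCLike.inner_apply, smul_eq_mul]
    left; ring_nf
  obtain ⟨Φ, hΦ⟩ := exists_schwartz_iteratedDeriv φ m
  have hFT : 𝓕 (iteratedDeriv m ⇑φ)
      = fun w : ℝ => (2 * π * Complex.I * w) ^ m • 𝓕 ⇑φ w :=
    Real.fourier_iteratedDeriv (N := (⊤:ℕ∞)) (φ.smooth ⊤)
      (fun k _ => by
        obtain ⟨F, hF⟩ := exists_schwartz_iteratedDeriv φ k
        rw [← hF]; exact F.integrable) le_top
  have key : ∀ ξ : ℝ, (ξ:ℂ)^m * 𝓕 ⇑φ (-ξ/(2*π)) = Complex.I^m * 𝓕 ⇑Φ (-ξ/(2*π)) := by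
    intro ξ
    rw [hΦ, hFT]
    simp only [smul_eq_mul]
    rw [← mul_assoc, ← mul_pow]
    congr 2
    have hπc : ((π:ℝ):ℂ) ≠ 0 := Complex.ofReal_ne_zero.mpr hπ
    rw [show Complex.I * (2 * ↑π * Complex.I * ((-ξ/(2*π) : ℝ) : ℂ))
        = (Complex.I * Complex.I) * (2 * ↑π * ((-ξ/(2*π) : ℝ) : ℂ)) from by ring,
      Complex.I_mul_I]
    push_cast
    field_simp
  have I1 : (∫ ξ : ℝ, ∫ y : ℝ,
        (ξ : ℂ) ^ m * g ((x + y) / 2) * Complex.exp (Complex.I * ξ * (x - y) / ε) * ψ y)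
      = (ε:ℂ) * (Complex.I^m * ((2*π:ℝ) • (Φ 0))) := by
    rw [show (∫ ξ : ℝ, ∫ y : ℝ,
          (ξ : ℂ) ^ m * g ((x + y) / 2) * Complex.exp (Complex.I * ξ * (x - y) / ε) * ψ y)
        = ∫ ξ : ℝ, (ε:ℂ) * ((ξ:ℂ)^m * 𝓕 ⇑φ (-ξ/(2*π))) from congrArg _ (funext inner_eq),
      MeasureTheory.integral_const_mul]
    congr 1
    rw [show (∫ ξ:ℝ, (ξ:ℂ)^m * 𝓕 ⇑φ (-ξ/(2*π))) = ∫ ξ:ℝ, Complex.I^m * 𝓕 ⇑Φ (-ξ/(2*π))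
        from congrArg _ (funext key), MeasureTheory.integral_const_mul]
    congr 1
    rw [show (∫ ξ:ℝ, 𝓕 ⇑Φ (-ξ/(2*π))) = ∫ ξ:ℝ, 𝓕 ⇑Φ ((-(2*π)⁻¹) * ξ)
        from congrArg _ (funext fun ξ => congrArg _ (by field_simp)),
      MeasureTheory.Measure.integral_comp_mul_left (𝓕 ⇑Φ) (-(2*π)⁻¹),
      integral_fourier_eq_self Φ, inv_neg, inv_inv, abs_neg,
      abs_of_pos (by positivity : (0:ℝ) < 2*π)]
  have hψs : ContDiff ℝ (⊤:ℕ∞) (fun u : ℝ => ψ (x + (-ε) * u)) :=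
    (ψ.smooth ⊤).comp (hasTemperateGrowth_affine x (-ε)).1
  have hgs : ContDiff ℝ (⊤:ℕ∞) (fun u : ℝ => g (x + (-(ε/2)) * u)) := hh.1
  have hΦ0 : Φ 0 = ∑ j ∈ Finset.range (m+1), (m.choose j : ℂ)
      * ((-ε)^j • iteratedDeriv j (⇑ψ) x) * ((-(ε/2))^(m-j) • iteratedDeriv (m-j) g x) := by
    have h0 : Φ 0 = iteratedDeriv m ⇑φ 0 := congrFun hΦ 0
    rw [h0, show ⇑φ = (fun u : ℝ => ψ (x + (-ε) * u) * g (x + (-(ε/2)) * u)) from funext hφ,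
      iteratedDeriv_mul_leibniz hψs hgs m]
    apply Finset.sum_congr rfl
    intro j _
    rw [iteratedDeriv_comp_affine (ψ.smooth (⊤:ℕ∞)) x (-ε) j 0,
      iteratedDeriv_comp_affine hg' x (-(ε/2)) (m-j) 0]
    simp only [mul_zero, add_zero]
  rw [I1, hΦ0, Complex.real_smul]
  have hπc : ((π:ℝ):ℂ) ≠ 0 := Complex.ofReal_ne_zero.mpr hπ
  have hεc : ((ε:ℝ):ℂ) ≠ 0 := Complex.ofReal_ne_zero.mpr hεne
  rw [show ∀ z : ℂ, (2 * (π:ℂ) * (ε:ℂ))⁻¹ * ((ε:ℂ) * (Complex.I ^ m * (((2*π : ℝ):ℂ) * z)))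
      = Complex.I ^ m * z from fun z => by push_cast; field_simp]
  rw [← Finset.sum_range_reflect (fun j => (m.choose j : ℂ)
      * ((-ε)^j • iteratedDeriv j (⇑ψ) x) * ((-(ε/2))^(m-j) • iteratedDeriv (m-j) g x)) (m+1)]
  simp only [Nat.add_sub_cancel]
  rw [Finset.mul_sum, Finset.mul_sum]
  apply Finset.sum_congr rfl
  intro j hj
  have hj' : j ≤ m := Nat.lt_succ_iff.mp (Finset.mem_range.mp hj)
  rw [Nat.choose_symm hj', Nat.sub_sub_self hj', Complex.real_smul, Complex.real_smul]
  push_cast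
  have h1 : (-((ε:ℂ)/2))^j = (-(ε:ℂ))^j * ((2:ℂ)^j)⁻¹ := by
    rw [show (-((ε:ℂ)/2)) = (-(ε:ℂ)) * (2:ℂ)⁻¹ from by ring, mul_pow, inv_pow]
  have h2 : (-(ε:ℂ))^(m-j) * (-(ε:ℂ))^j = (-(ε:ℂ))^m := by
    rw [← pow_add, Nat.sub_add_cancel hj']
  have h3 : Complex.I^m * (-(ε:ℂ))^m = (-Complex.I * (ε:ℂ))^m := by
    rw [← mul_pow]; congr 1; ring
  have key2 : Complex.I^m * ((-(ε:ℂ))^(m-j) * (-((ε:ℂ)/2))^j)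
      = (-Complex.I*(ε:ℂ))^m * ((2:ℂ)^j)⁻¹ := by
    calc Complex.I^m * ((-(ε:ℂ))^(m-j) * (-((ε:ℂ)/2))^j)
        = (Complex.I^m * (-(ε:ℂ))^m) * ((2:ℂ)^j)⁻¹ := by rw [h1, ← h2]; ring
      _ = (-Complex.I*(ε:ℂ))^m * ((2:ℂ)^j)⁻¹ := by rw [h3]
  linear_combination ((m.choose j : ℂ) * iteratedDeriv (m-j) (⇑ψ) x * iteratedDeriv j g x) * key2
end
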